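/- arXiv:2209.08856 — 2 statements merged into one kernel-verified Lean document; each statement's English description precedes it below -/
import Mathlib

section
/- For every scoring system s, the rule Score-s satisfies reinforcement: for all ranking profiles P and P' over the same finite candidate set C, if Score-s(P) ∩ Score-s(P') is nonempty, then Score-s(P + P') = Score-s(P) ∩ Score-s(P'), where P + P' denotes the concatenation of the two profiles. -/
open Finset

/-- A scoring system: for each number `m` of candidates, `s m i` is the score awarded
to the candidate in (1-indexed) position `i`. -/
abbrev ScoringSystem : Type := ℕ → ℕ → ℝ

variable {α : Type*}

/-- A ranking of the finite candidate set `C`: a duplicate-free list consisting of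
exactly the candidates of `C`, earlier in the list meaning more preferred. -/
def IsRanking [DecidableEq α] (C : Finset α) (r : List α) : Prop :=
  r.Nodup ∧ r.toFinset = C

/-- A ranking profile over `C`: a finite list of rankings of `C`. -/
def IsProfile [DecidableEq α] (C : Finset α) (P : List (List α)) : Prop :=
  ∀ r ∈ P, IsRanking C r

/-- The (1-indexed) position of candidate `c` in ranking `r`. -/
def rpos [DecidableEq α] (r : List α) (c : α) : ℕ :=
  r.idxOf c + 1

/-- The `s`-score of candidate `c` in the profile `P` over candidate set `C`. -/
def scoreOf [DecidableEq α] (s : ScoringSystem) (C : Finset α)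
    (P : List (List α)) (c : α) : ℝ :=
  (P.map fun r => s C.card (rpos r c)).sum

/-- `c` is an `s`-winner of `P` (a candidate of maximum `s`-score). -/
def IsWinner [DecidableEq α] (s : ScoringSystem) (C : Finset α)
    (P : List (List α)) (c : α) : Prop :=
  c ∈ C ∧ ∀ d ∈ C, scoreOf s C P d ≤ scoreOf s C P c

/-- `c` is an `s`-loser of `P` (a candidate of minimum `s`-score). -/
def IsLoser [DecidableEq α] (s : ScoringSystem) (C : Finset α)
    (P : List (List α)) (c : α) : Prop :=
  c ∈ C ∧ ∀ d ∈ C, scoreOf s C P c ≤ scoreOf s C P d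

/-- Restriction of a profile to the candidate subset `C'`. -/
def restrictProfile [DecidableEq α] (C' : Finset α) (P : List (List α)) :
    List (List α) :=
  P.map fun r => r.filter (fun x => decide (x ∈ C'))

/-- Auxiliary recursion for Sequential-`s`-Winner, consuming the ranking from the top. -/
def SeqWinnerSel [DecidableEq α] (s : ScoringSystem) :
    List α → Finset α → List (List α) → Prop
  | [], C, _ => C = ∅
  | c :: rest, C, P =>
      IsWinner s C P c ∧
        SeqWinnerSel s rest (C.erase c) (restrictProfile (C.erase c) P)

/-- `SeqWinner s C P r` means that the ranking `r` belongs to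
`Sequential-s-Winner(P)` for the profile `P` over candidate set `C`. -/
def SeqWinner [DecidableEq α] (s : ScoringSystem) (C : Finset α)
    (P : List (List α)) (r : List α) : Prop :=
  SeqWinnerSel s r C P

/-- Auxiliary recursion for Sequential-`s`-Loser, consuming the ranking from the bottom. -/
def SeqLoserSel [DecidableEq α] (s : ScoringSystem) :
    List α → Finset α → List (List α) → Prop
  | [], C, _ => C = ∅
  | c :: rest, C, P =>
      IsLoser s C P c ∧
        SeqLoserSel s rest (C.erase c) (restrictProfile (C.erase c) P)

/-- `SeqLoser s C P r` means that the ranking `r` belongs to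
`Sequential-s-Loser(P)` for the profile `P` over candidate set `C`. -/
def SeqLoser [DecidableEq α] (s : ScoringSystem) (C : Finset α)
    (P : List (List α)) (r : List α) : Prop :=
  SeqLoserSel s r.reverse C P

/-- The rule Score-`s`: a ranking is selected iff whenever `c` has a strictly larger
`s`-score than `d`, `c` is ranked above `d`. -/
def ScoreSel [DecidableEq α] (s : ScoringSystem) (C : Finset α)
    (P : List (List α)) (r : List α) : Prop :=
  IsRanking C r ∧
    ∀ c ∈ C, ∀ d ∈ C, scoreOf s C P d < scoreOf s C P c → rpos r c < rpos r d

section Respects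

variable {β : Type*} [LinearOrder β]

def Respects (S : Set α) (above : α → α → Prop) (f : α → β) : Prop :=
  ∀ c ∈ S, ∀ d ∈ S, f d < f c → above c d

theorem Respects.le_of_lt {S : Set α} {above : α → α → Prop} [Std.Asymm above]
    {f g : α → β} (hf : Respects S above f) (hg : Respects S above g)
    {c d : α} (hc : c ∈ S) (hd : d ∈ S) (hlt : f d < f c) : g d ≤ g c :=
  not_lt.mp fun hgt => Std.Asymm.asymm _ _ (hf c hc d hd hlt) (hg d hd c hc hgt)

theorem Respects.add [AddCommMonoid β] [IsOrderedCancelAddMonoid β]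
    {S : Set α} {above : α → α → Prop} {f g : α → β}
    (hf : Respects S above f) (hg : Respects S above g) : Respects S above (f + g) :=
  fun c hc d hd hlt => (lt_or_lt_of_add_lt_add hlt).elim (hf c hc d hd) (hg c hc d hd)

/-- If a single asymmetric order respects both `f` and `g`, no two elements of `S` are strictly
ordered oppositely by `f` and `g`, so a strict comparison in `f` survives in `f + g`. -/
theorem respects_add_iff [AddCommMonoid β] [IsOrderedCancelAddMonoid β]
    {S : Set α} {above₀ : α → α → Prop} [Std.Asymm above₀]
    {f g : α → β} (hf₀ : Respects S above₀ f) (hg₀ : Respects S above₀ g)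
    (above : α → α → Prop) :
    Respects S above (f + g) ↔ Respects S above f ∧ Respects S above g := by
  refine ⟨fun h => ⟨fun c hc d hd hlt => h c hc d hd ?_, fun c hc d hd hlt => h c hc d hd ?_⟩,
    fun ⟨hf, hg⟩ => hf.add hg⟩
  · exact add_lt_add_of_lt_of_le hlt (hf₀.le_of_lt hg₀ hc hd hlt)
  · exact add_lt_add_of_le_of_lt (hg₀.le_of_lt hf₀ hc hd hlt) hlt

end Respects

theorem scoreOf_append [DecidableEq α] (s : ScoringSystem) (C : Finset α)
    (P P' : List (List α)) :
    scoreOf s C (P ++ P') = scoreOf s C P + scoreOf s C P' := by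
  ext c
  simp only [scoreOf, List.map_append, List.sum_append, Pi.add_apply]

theorem scoreSel_iff [DecidableEq α] (s : ScoringSystem) (C : Finset α)
    (P : List (List α)) (r : List α) :
    ScoreSel s C P r ↔
      IsRanking C r ∧ Respects (C : Set α) (fun c d => rpos r c < rpos r d) (scoreOf s C P) :=
  Iff.rfl

instance [DecidableEq α] (r : List α) : Std.Asymm fun c d => rpos r c < rpos r d :=
  ⟨fun _ _ => lt_asymm⟩

theorem scoreRule_reinforcement_general [DecidableEq α] (s : ScoringSystem)
    (C : Finset α) (P P' : List (List α))
    (hne : ∃ r, ScoreSel s C P r ∧ ScoreSel s C P' r) :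
    ∀ r, ScoreSel s C (P ++ P') r ↔ (ScoreSel s C P r ∧ ScoreSel s C P' r) := by
  obtain ⟨r₀, ⟨-, h₀⟩, ⟨-, h₀'⟩⟩ := hne
  intro r
  simp only [scoreSel_iff, scoreOf_append, respects_add_iff h₀ h₀']
  tauto

/-- Score-`s` satisfies reinforcement:
if some ranking is selected on both `P` and `P'`, then the rankings selected on
the concatenated profile `P ++ P'` are exactly those selected on both. -/
theorem scoreRule_reinforcement [DecidableEq α] (s : ScoringSystem)
    (C : Finset α) (P P' : List (List α))
    (hP : IsProfile C P) (hP' : IsProfile C P')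
    (hne : ∃ r, ScoreSel s C P r ∧ ScoreSel s C P' r) :
    ∀ r, ScoreSel s C (P ++ P') r ↔ (ScoreSel s C P r ∧ ScoreSel s C P' r) :=
  scoreRule_reinforcement_general s C P P' hne
end

section
/- Let s be a scoring system, P a ranking profile over a finite candidate set C, d ∈ C a candidate, and k ∈ [|C|]. There exists a ranking ≻ ∈ Sequential-s-Winner(P) with pos(≻,d) = k if and only if there exists a subset C' ⊆ C∖{d} with |C'| = k−1 such that C' is an elimination set for (P, s) and d is an s-winner of the profile P restricted to C∖C'. -/
open Finset

variable {α : Type*}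

/-- `E` is an elimination set for `(P, s)`: some ranking selected by
Sequential-`s`-Winner has exactly the candidates of `E` in its first `|E|` positions. -/
def IsElimSet [DecidableEq α] (s : ScoringSystem) (C : Finset α)
    (P : List (List α)) (E : Finset α) : Prop :=
  ∃ r, SeqWinner s C P r ∧ (r.take E.card).toFinset = E

/-!
Sequential-`s`-Winner is greedy: once the top candidates of a selected ranking are fixed,
they may be followed by any selected ranking of the profile restricted to the remaining
candidates. Hence a selected ranking with `d` at position `k` is cut after its first `k - 1`
candidates, and conversely a selected ranking starting with `C'` is continued by `d` followed by
any selected ranking of what is left.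
-/

section Sequential

variable [DecidableEq α] {s : ScoringSystem}

lemma restrictProfile_of_isProfile {C : Finset α} {P : List (List α)} (hP : IsProfile C P) :
    restrictProfile C P = P := by
  conv_rhs => rw [← List.map_id P]
  refine List.map_congr_left fun r hr => List.filter_eq_self.mpr fun x hx => ?_
  simpa [← (hP r hr).2] using hx

lemma restrictProfile_restrictProfile {E F : Finset α} (h : E ⊆ F) (P : List (List α)) :
    restrictProfile E (restrictProfile F P) = restrictProfile E P := by
  simp only [restrictProfile, List.map_map]
  refine List.map_congr_left fun r _ => ?_
  simp only [Function.comp, List.filter_filter]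
  refine List.filter_congr fun x _ => ?_
  by_cases hx : x ∈ E
  · simp [hx, h hx]
  · simp [hx]

lemma IsProfile.restrictProfile {C E : Finset α} {P : List (List α)} (hP : IsProfile C P)
    (h : E ⊆ C) : IsProfile E (restrictProfile E P) := by
  intro r hr
  obtain ⟨q, hq, rfl⟩ := List.mem_map.mp hr
  refine ⟨(hP q hq).1.filter _, ?_⟩
  rw [List.toFinset_filter, (hP q hq).2]
  ext x
  simpa using fun hx => h hx

lemma SeqWinnerSel.isRanking {r : List α} {C : Finset α} {P : List (List α)}
    (h : SeqWinnerSel s r C P) : IsRanking C r := by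
  induction r generalizing C P with
  | nil => exact ⟨List.nodup_nil, by simp [show C = ∅ from h]⟩
  | cons c r ih =>
    obtain ⟨hn, hf⟩ := ih h.2
    have hc : c ∉ r := fun hc => by
      have := hf ▸ List.mem_toFinset.mpr hc
      simp at this
    exact ⟨List.nodup_cons.mpr ⟨hc, hn⟩, by rw [List.toFinset_cons, hf, insert_erase h.1.1]⟩

lemma exists_seqWinnerSel (s : ScoringSystem) (C : Finset α) (P : List (List α)) :
    ∃ r, SeqWinnerSel s r C P := by
  induction C using Finset.strongInduction generalizing P with
  | _ C ih =>
    rcases C.eq_empty_or_nonempty with rfl | hne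
    · exact ⟨[], rfl⟩
    · obtain ⟨c, hc, hmax⟩ := exists_max_image C (scoreOf s C P) hne
      obtain ⟨r, hr⟩ := ih (C.erase c) (erase_ssubset hc) _
      exact ⟨c :: r, ⟨hc, hmax⟩, hr⟩

lemma exists_seqWinnerSel_cons_of_isWinner {C : Finset α} {P : List (List α)} {d : α}
    (hd : IsWinner s C P d) : ∃ r, SeqWinnerSel s (d :: r) C P :=
  (exists_seqWinnerSel s _ _).imp fun _ hr => ⟨hd, hr⟩

lemma erase_sdiff_toFinset (C : Finset α) (c : α) (l : List α) :
    C.erase c \ l.toFinset = C \ (c :: l).toFinset := by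
  ext x
  simp only [mem_sdiff, mem_erase, List.toFinset_cons, mem_insert]
  tauto

lemma SeqWinnerSel.of_append {l t : List α} {C : Finset α} {P : List (List α)}
    (hP : IsProfile C P) (h : SeqWinnerSel s (l ++ t) C P) :
    SeqWinnerSel s t (C \ l.toFinset) (restrictProfile (C \ l.toFinset) P) := by
  induction l generalizing C P with
  | nil => simpa [restrictProfile_of_isProfile hP] using h
  | cons c l ih =>
    have := ih (hP.restrictProfile (erase_subset c C)) h.2
    rwa [erase_sdiff_toFinset, restrictProfile_restrictProfile
      (erase_sdiff_toFinset C c l ▸ sdiff_subset)] at this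

lemma SeqWinnerSel.append_of_append {l t t' : List α} {C : Finset α} {P : List (List α)}
    (hP : IsProfile C P) (h : SeqWinnerSel s (l ++ t) C P)
    (h' : SeqWinnerSel s t' (C \ l.toFinset) (restrictProfile (C \ l.toFinset) P)) :
    SeqWinnerSel s (l ++ t') C P := by
  induction l generalizing C P with
  | nil => simpa [restrictProfile_of_isProfile hP] using h'
  | cons c l ih =>
    rw [← erase_sdiff_toFinset, ← restrictProfile_restrictProfile sdiff_subset] at h'
    exact ⟨h.1, ih (hP.restrictProfile (erase_subset c C)) h.2 h'⟩

lemma rpos_append_cons {l : List α} {d : α} (hd : d ∉ l) (t : List α) :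
    rpos (l ++ d :: t) d = l.length + 1 := by
  simp [rpos, List.idxOf_append_of_notMem hd]

end Sequential

theorem position_k_characterization_general [DecidableEq α] (s : ScoringSystem)
    (C : Finset α) (P : List (List α)) (hP : IsProfile C P)
    (d : α) (hd : d ∈ C) (k : ℕ) (hk1 : 1 ≤ k) :
    (∃ r, SeqWinner s C P r ∧ rpos r d = k) ↔
      ∃ C' : Finset α, C' ⊆ C.erase d ∧ C'.card = k - 1 ∧ IsElimSet s C P C' ∧
        IsWinner s (C \ C') (restrictProfile (C \ C') P) d := by
  constructor
  · rintro ⟨r, hr, rfl⟩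
    obtain ⟨hnd, hfin⟩ := hr.isRanking
    obtain ⟨l, t, rfl⟩ := List.append_of_mem (List.mem_toFinset.mp (hfin ▸ hd))
    have hdl : d ∉ l := fun h => (List.nodup_append.mp hnd).2.2 d h d (by simp) rfl
    have hcard : l.toFinset.card = l.length := List.toFinset_card_of_nodup hnd.of_append_left
    refine ⟨l.toFinset, fun x hx => ?_, by simp [hcard, rpos_append_cons hdl],
      ⟨_, hr, by simp [hcard]⟩, (SeqWinnerSel.of_append hP hr).1⟩
    rw [List.mem_toFinset] at hx
    exact mem_erase.mpr ⟨by rintro rfl; exact hdl hx, by rw [← hfin]; simp [hx]⟩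
  · rintro ⟨C', hsub, hcard, ⟨r, hr, htake⟩, hwin⟩
    set l := r.take C'.card
    have hr' : SeqWinnerSel s (l ++ r.drop C'.card) C P := by rwa [List.take_append_drop]
    have hlen : l.length = C'.card := by
      rw [← List.toFinset_card_of_nodup (hr.isRanking.1.sublist (List.take_sublist _ _)), htake]
    have hdl : d ∉ l := fun h => (mem_erase.mp (hsub (htake ▸ List.mem_toFinset.mpr h))).1 rfl
    obtain ⟨t, ht⟩ := exists_seqWinnerSel_cons_of_isWinner hwin
    exact ⟨l ++ d :: t, hr'.append_of_append hP (htake ▸ ht), by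
      rw [rpos_append_cons hdl, hlen, hcard]; omega⟩

/-- some ranking selected by Sequential-`s`-Winner places `d` in
position `k` iff there is a `(k−1)`-element elimination set `C' ⊆ C∖{d}` such that `d`
is an `s`-winner of `P` restricted to `C∖C'`. -/
theorem position_k_characterization [DecidableEq α] (s : ScoringSystem)
    (C : Finset α) (P : List (List α)) (hP : IsProfile C P)
    (d : α) (hd : d ∈ C) (k : ℕ) (hk1 : 1 ≤ k) (hk2 : k ≤ C.card) :
    (∃ r, SeqWinner s C P r ∧ rpos r d = k) ↔
      ∃ C' : Finset α, C' ⊆ C.erase d ∧ C'.card = k - 1 ∧ IsElimSet s C P C' ∧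
        IsWinner s (C \ C') (restrictProfile (C \ C') P) d :=
  position_k_characterization_general s C P hP d hd k hk1
end
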